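/- arXiv:2308.04567 — 4 statements merged into one kernel-verified Lean document; each statement's English description precedes it below -/
import Mathlib

section
/- For every positive integer n, the sum over k from 0 to n of (-4)^k * (n/(n+k)) * C(n+k, n-k) equals (-1)^n. -/
/-!
The sum is `b_n(-4) + 2 B_{n-1}(-4)` in terms of the Morgan–Voyce polynomials
`b_n(x) = ∑ C(n+k, 2k) x^k` and `B_n(x) = ∑ C(n+k+1, 2k+1) x^k`: this follows from
`n/(n+k) = 1 - k/(n+k)` and the absorption identity `2k/(n+k) · C(n+k, 2k) = C(n+k-1, 2k-1)`.
Pascal's rule gives the recurrences `b_{n+1} = b_n + x B_n`, `B_{n+1} = b_{n+1} + B_n`, whose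
solution at `x = -4` is `b_n = (-1)^n (2n+1)`, `B_n = (-1)^n (n+1)`.
-/

open Finset

section MorganVoyce

variable {R : Type*} [CommRing R] (x : R)

def morganVoyce (n : ℕ) : R :=
  ∑ k ∈ range (n + 1), x ^ k * ((n + k).choose (2 * k) : R)

def morganVoyceB (n : ℕ) : R :=
  ∑ k ∈ range (n + 1), x ^ k * ((n + 1 + k).choose (2 * k + 1) : R)

@[simp]
lemma morganVoyce_zero : morganVoyce x 0 = 1 := by
  simp [morganVoyce]

@[simp]
lemma morganVoyceB_zero : morganVoyceB x 0 = 1 := by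
  simp [morganVoyceB]

lemma morganVoyce_succ (n : ℕ) :
    morganVoyce x (n + 1) = morganVoyce x n + x * morganVoyceB x n := by
  have pascal : ∀ k ∈ range (n + 1),
      x ^ (k + 1) * ((n + 1 + (k + 1)).choose (2 * (k + 1)) : R) =
        x * (x ^ k * ((n + 1 + k).choose (2 * k + 1) : R)) +
          x ^ (k + 1) * ((n + 1 + k).choose (2 * k + 2) : R) := by
    intro k _
    rw [show n + 1 + (k + 1) = n + 1 + k + 1 by omega, show 2 * (k + 1) = 2 * k + 1 + 1 by omega,
      Nat.choose_succ_succ']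
    push_cast
    ring
  have tail : ∑ k ∈ range (n + 1), x ^ (k + 1) * ((n + 1 + k).choose (2 * k + 2) : R) =
      morganVoyce x n - 1 := by
    have vanishing : (n + 1 + n).choose (2 * n + 2) = 0 := Nat.choose_eq_zero_of_lt (by omega)
    rw [sum_range_succ, vanishing, morganVoyce, sum_range_succ']
    simp only [Nat.cast_zero, mul_zero, add_zero, pow_zero, Nat.choose_zero_right, Nat.cast_one,
      mul_one, add_sub_cancel_right]
    refine sum_congr rfl fun k _ => ?_
    rw [show n + (k + 1) = n + 1 + k by omega, show 2 * (k + 1) = 2 * k + 2 by omega]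
  rw [morganVoyce, sum_range_succ', sum_congr rfl pascal, sum_add_distrib, ← mul_sum,
    ← morganVoyceB, tail]
  simp only [pow_zero, mul_zero, Nat.choose_zero_right, Nat.cast_one, mul_one]
  ring

lemma morganVoyceB_succ (n : ℕ) :
    morganVoyceB x (n + 1) = morganVoyce x (n + 1) + morganVoyceB x n := by
  have pascal : ∀ k ∈ range (n + 2),
      x ^ k * ((n + 1 + 1 + k).choose (2 * k + 1) : R) =
        x ^ k * ((n + 1 + k).choose (2 * k) : R) + x ^ k * ((n + 1 + k).choose (2 * k + 1) : R) := by
    intro k _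
    rw [show n + 1 + 1 + k = n + 1 + k + 1 by omega, Nat.choose_succ_succ']
    push_cast
    ring
  have vanishing : (n + 1 + (n + 1)).choose (2 * (n + 1) + 1) = 0 :=
    Nat.choose_eq_zero_of_lt (by omega)
  rw [morganVoyceB, sum_congr rfl pascal, sum_add_distrib, ← morganVoyce, sum_range_succ _ (n + 1),
    vanishing, morganVoyceB]
  simp

lemma morganVoyce_neg_four (n : ℕ) :
    morganVoyce (-4 : R) n = (-1) ^ n * (2 * n + 1) ∧
      morganVoyceB (-4 : R) n = (-1) ^ n * (n + 1) := by
  induction n with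
  | zero => simp
  | succ n ih =>
    have hb : morganVoyce (-4 : R) (n + 1) = (-1) ^ (n + 1) * (2 * (n + 1 : ℕ) + 1) := by
      rw [morganVoyce_succ, ih.1, ih.2]
      push_cast
      ring
    refine ⟨hb, ?_⟩
    rw [morganVoyceB_succ, hb, ih.2]
    push_cast
    ring

end MorganVoyce

lemma div_mul_choose_eq {K : Type*} [Field K] [CharZero K] (n j : ℕ) :
    (n : K) / (n + (j + 1)) * ((n + (j + 1)).choose (2 * (j + 1)) : K) =
      ((n + (j + 1)).choose (2 * (j + 1)) : K) - ((n + j).choose (2 * j + 1) : K) / 2 := by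
  have absorption : ((n + j + 1 : ℕ) : K) * ((n + j).choose (2 * j + 1) : K) =
      ((n + j + 1).choose (2 * j + 2) : K) * ((2 * j + 2 : ℕ) : K) := by
    exact_mod_cast Nat.add_one_mul_choose_eq (n + j) (2 * j + 1)
  rw [show n + (j + 1) = n + j + 1 by omega, show 2 * (j + 1) = 2 * j + 2 by omega]
  push_cast at absorption ⊢
  have hden : (n : K) + (j + 1) ≠ 0 := by norm_cast
  field_simp
  linear_combination absorption

lemma sum_pow_mul_div_mul_choose {K : Type*} [Field K] [CharZero K] (x : K) (m : ℕ) :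
    ∑ k ∈ range (m + 2), x ^ k * (((m + 1 : ℕ) : K) / ((m + 1 : ℕ) + k)) *
      ((m + 1 + k).choose (2 * k) : K) = morganVoyce x (m + 1) - x / 2 * morganVoyceB x m := by
  have split : ∀ k ∈ range (m + 1),
      x ^ (k + 1) * (((m + 1 : ℕ) : K) / ((m + 1 : ℕ) + (k + 1 : ℕ))) *
        ((m + 1 + (k + 1)).choose (2 * (k + 1)) : K) =
      x ^ (k + 1) * ((m + 1 + (k + 1)).choose (2 * (k + 1)) : K) -
        x / 2 * (x ^ k * ((m + 1 + k).choose (2 * k + 1) : K)) := by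
    intro k _
    rw [mul_assoc, Nat.cast_add_one k, div_mul_choose_eq]
    ring
  rw [sum_range_succ', sum_congr rfl split, sum_sub_distrib, ← mul_sum, ← morganVoyceB,
    morganVoyce, sum_range_succ' _ (m + 1)]
  simp only [pow_zero, Nat.cast_add, Nat.cast_one, CharP.cast_eq_zero, add_zero, ne_eq,
    Nat.cast_add_one_ne_zero m, not_false_eq_true, div_self, mul_one, mul_zero, Nat.choose_zero_right]
  ring

theorem stmt_4 (n : ℕ) (hn : 0 < n) :
    ∑ k ∈ range (n + 1), (-4 : ℚ) ^ k * ((n : ℚ) / (n + k)) *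
      (Nat.choose (n + k) (n - k)) = (-1 : ℚ) ^ n := by
  obtain ⟨m, rfl⟩ := Nat.exists_eq_add_one_of_ne_zero hn.ne'
  have choose_symm : ∀ k ∈ range (m + 1 + 1),
      (-4 : ℚ) ^ k * (((m + 1 : ℕ) : ℚ) / ((m + 1 : ℕ) + k)) * ((m + 1 + k).choose (m + 1 - k) : ℚ) =
        (-4 : ℚ) ^ k * (((m + 1 : ℕ) : ℚ) / ((m + 1 : ℕ) + k)) * ((m + 1 + k).choose (2 * k) : ℚ) := by
    intro k hk
    rw [Nat.choose_symm_of_eq_add (show m + 1 + k = m + 1 - k + 2 * k by have := mem_range.mp hk; omega)]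
  rw [sum_congr rfl choose_symm, sum_pow_mul_div_mul_choose, (morganVoyce_neg_four _).1,
    (morganVoyce_neg_four m).2]
  push_cast
  ring
end

section
/- For every odd integer p and every even nonnegative integer n, T_n(√5 · F_p / 2) = L_{pn} / 2; and for every odd integer p and every odd positive integer n, T_n(√5 · F_p / 2) = (√5/2) · F_{pn}. -/
/-!
By Binet's formula and `ψ = -φ⁻¹`, for odd `p` we have `√5 F_p = φ^p - ψ^p = x + x⁻¹` with
`x = φ^p`. Since `T_n((x + x⁻¹)/2) = (x^n + x^{-n})/2`, the value is `(φ^{pn} + φ^{-pn})/2`, and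
`φ^{-pn} = ±ψ^{pn}` according to the parity of `pn`, giving `L_{pn}/2` or `√5 F_{pn}/2`.
-/

open Finset

/-- Fibonacci numbers extended to all integers: `F_{-n} = (-1)^{n-1} F_n`. -/
def fibZ (n : ℤ) : ℤ :=
  if 0 ≤ n then Nat.fib n.toNat else (-1) ^ (n.natAbs + 1) * Nat.fib n.natAbs

/-- Lucas numbers extended to all integers: `L_n = F_{n-1} + F_{n+1}`. -/
def lucasZ (n : ℤ) : ℤ := fibZ (n - 1) + fibZ (n + 1)

namespace Polynomial.Chebyshev

variable {K : Type*} [Field K]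

theorem C_eval_add_inv {x : K} (hx : x ≠ 0) (n : ℤ) :
    (C K n).eval (x + x⁻¹) = x ^ n + x ^ (-n) := by
  have hnat (k : ℕ) : (C K k).eval (x + x⁻¹) = x ^ k + x⁻¹ ^ k := by
    rw [← dickson_one_one_eq_chebyshev_C, dickson_one_one_eval_add_inv _ _ (mul_inv_cancel₀ hx)]
  obtain ⟨k, rfl | rfl⟩ := n.eq_nat_or_neg
  · simp [hnat]
  · rw [C_neg, hnat, neg_neg, zpow_neg, zpow_natCast, inv_pow, add_comm]

theorem T_eval_half_add_inv [NeZero (2 : K)] {x : K} (hx : x ≠ 0) (n : ℤ) :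
    (T K n).eval ((x + x⁻¹) / 2) = (x ^ n + x ^ (-n)) / 2 := by
  have h := congrArg (eval ((x + x⁻¹) / 2)) (C_comp_two_mul_X K n)
  rw [eval_comp, eval_mul, eval_ofNat, eval_X, mul_div_cancel₀ _ two_ne_zero,
    C_eval_add_inv hx, eval_mul, eval_ofNat] at h
  rw [h, mul_div_cancel_left₀ _ two_ne_zero]

end Polynomial.Chebyshev

open Polynomial.Chebyshev Real
open scoped goldenRatio

theorem goldenConj_zpow_of_even {n : ℤ} (hn : Even n) : ψ ^ n = φ ^ (-n) := by
  rw [← inv_zpow', inv_goldenRatio, hn.neg_zpow]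

theorem goldenConj_zpow_of_odd {n : ℤ} (hn : Odd n) : ψ ^ n = -φ ^ (-n) := by
  rw [← inv_zpow', inv_goldenRatio, hn.neg_zpow, neg_neg]

theorem fibZ_eq_intFib (n : ℤ) : fibZ n = Int.fib n := by
  obtain ⟨k, rfl | rfl⟩ := n.eq_nat_or_neg
  · simp [fibZ]
  · rcases k.eq_zero_or_pos with rfl | hk
    · simp [fibZ]
    · rw [fibZ, if_neg (by omega), Int.fib_neg_natCast, Int.natAbs_neg, Int.natAbs_natCast]

theorem sqrt_five_mul_fibZ (n : ℤ) : √5 * fibZ n = φ ^ n - ψ ^ n := by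
  rw [fibZ_eq_intFib, coe_intFib_eq, mul_div_cancel₀ _ (by positivity)]

theorem coe_lucasZ (n : ℤ) : (lucasZ n : ℝ) = φ ^ n + ψ ^ n := by
  refine mul_left_cancel₀ (by positivity : √5 ≠ 0) ?_
  rw [lucasZ, Int.cast_add, mul_add, sqrt_five_mul_fibZ, sqrt_five_mul_fibZ,
    zpow_sub_one₀ goldenRatio_ne_zero, zpow_sub_one₀ goldenConj_ne_zero,
    zpow_add_one₀ goldenRatio_ne_zero, zpow_add_one₀ goldenConj_ne_zero,
    inv_goldenRatio, inv_goldenConj, ← goldenRatio_sub_goldenConj]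
  ring

theorem stmt_6 (p : ℤ) (hp : Odd p) (n : ℕ) :
    (Even n →
      (Polynomial.Chebyshev.T ℝ n).eval (Real.sqrt 5 * (fibZ p : ℝ) / 2) =
        (lucasZ (p * n) : ℝ) / 2) ∧
    (Odd n →
      (Polynomial.Chebyshev.T ℝ n).eval (Real.sqrt 5 * (fibZ p : ℝ) / 2) =
        Real.sqrt 5 / 2 * (fibZ (p * n) : ℝ)) := by
  have hx : √5 * (fibZ p : ℝ) / 2 = (φ ^ p + (φ ^ p)⁻¹) / 2 := by
    rw [sqrt_five_mul_fibZ, goldenConj_zpow_of_odd hp, zpow_neg, sub_neg_eq_add]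
  have hT : (T ℝ n).eval (√5 * (fibZ p : ℝ) / 2) = (φ ^ (p * n) + φ ^ (-(p * n))) / 2 := by
    rw [hx, T_eval_half_add_inv (zpow_ne_zero p goldenRatio_ne_zero), ← zpow_mul, ← zpow_mul,
      mul_neg]
  refine ⟨fun hn => ?_, fun hn => ?_⟩
  · rw [hT, coe_lucasZ, goldenConj_zpow_of_even ((Int.even_coe_nat n).mpr hn |>.mul_left p)]
  · rw [hT, div_mul_eq_mul_div, sqrt_five_mul_fibZ,
      goldenConj_zpow_of_odd (hp.mul ((Int.odd_coe_nat n).mpr hn)), sub_neg_eq_add]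
end

section
/- For every positive integer n and every integer t: if n is odd then the sum over k from 0 to n of (-1)^{n-k} * (n/(n+k)) * C(n+k, n-k) * F_{3k+t} equals (1/2)·L_t·F_n, and if n is even the same sum equals (1/2)·F_t·L_n. -/
open Finset

lemma fibZ_natCast (n : ℕ) : fibZ n = Nat.fib n := by simp [fibZ]

lemma fibZ_negCast (n : ℕ) : fibZ (-(n:ℤ)) = (-1)^(n+1) * Nat.fib n := by
  cases n with
  | zero => simp [fibZ]
  | succ m =>
    rw [fibZ, if_neg (by omega)]
    have h : (-((m:ℤ)+1)).natAbs = m + 1 := by omega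
    push_cast [h]
    ring

lemma fibZ_add_two (n : ℤ) : fibZ (n + 2) = fibZ (n + 1) + fibZ n := by
  obtain ⟨m, rfl | rfl⟩ := Int.eq_nat_or_neg n
  · have h2 : ((m:ℤ) + 2) = ((m+2 : ℕ) : ℤ) := by push_cast; ring
    have h1 : ((m:ℤ) + 1) = ((m+1 : ℕ) : ℤ) := by push_cast; ring
    rw [h2, h1, fibZ_natCast, fibZ_natCast, fibZ_natCast, Nat.fib_add_two]
    push_cast; ring
  · rcases m with _ | _ | _ | j
    · decide
    · decide
    · decide
    · have h2 : (-((j+3:ℕ):ℤ) + 2) = -((j+1 : ℕ) : ℤ) := by push_cast; ring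
      have h1 : (-((j+3:ℕ):ℤ) + 1) = -((j+2 : ℕ) : ℤ) := by push_cast; ring
      rw [h2, h1, fibZ_negCast, fibZ_negCast, fibZ_negCast]
      have hf : Nat.fib (j+3) = Nat.fib (j+1) + Nat.fib (j+2) := Nat.fib_add_two
      have hf2 : Nat.fib (j+2) = Nat.fib j + Nat.fib (j+1) := Nat.fib_add_two
      push_cast [hf, hf2]
      ring

lemma fibZ_nat_add (m : ℕ) (t : ℤ) :
    fibZ (m + t) = Nat.fib (m+1) * fibZ t + Nat.fib m * fibZ (t-1) := by
  induction m using Nat.twoStepInduction generalizing t with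
  | zero => simp
  | one =>
    have := fibZ_add_two (t - 1)
    simp only [sub_add_cancel] at this
    rw [show ((1:ℕ):ℤ) + t = t - 1 + 2 by ring, this]
    simp [Nat.fib]
  | more m ih1 ih2 =>
    have h : ((m+2:ℕ):ℤ) + t = ((m:ℤ) + t) + 2 := by push_cast; ring
    rw [h, fibZ_add_two, show (m:ℤ) + t + 1 = ((m+1:ℕ):ℤ) + t by push_cast; ring,
      ih2, ih1]
    have hf : Nat.fib (m+3) = Nat.fib (m+1) + Nat.fib (m+2) := Nat.fib_add_two
    have hf2 : Nat.fib (m+2) = Nat.fib m + Nat.fib (m+1) := Nat.fib_add_two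
    push_cast [hf, hf2]
    ring

/-- integer coefficient: `dC n k = 2 * (n/(n+k)) * C(n+k,2k)` -/
def dC (n k : ℕ) : ℕ := (n+k-1).choose (2*k) + (n+k).choose (2*k)

noncomputable def cQ (n k : ℕ) : ℚ := (-1)^(n+k) * (dC n k) / 2

lemma dC_eq_zero {n k : ℕ} (h : n < k) : dC n k = 0 := by
  unfold dC
  rw [Nat.choose_eq_zero_of_lt (by omega), Nat.choose_eq_zero_of_lt (by omega)]

lemma cQ_eq_zero {n k : ℕ} (h : n < k) : cQ n k = 0 := by
  simp [cQ, dC_eq_zero h]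

lemma dC_zero (n : ℕ) : dC n 0 = 2 := by
  simp [dC]

lemma dC_rec (n k : ℕ) :
    dC (n+2) (k+1) + dC n (k+1) = dC (n+1) k + 2 * dC (n+1) (k+1) := by
  unfold dC
  have e1 : n+2+(k+1)-1 = n+k+2 := by omega
  have e2 : n+2+(k+1) = n+k+3 := by omega
  have e3 : n+(k+1)-1 = n+k := by omega
  have e4 : n+(k+1) = n+k+1 := by omega
  have e5 : n+1+k-1 = n+k := by omega
  have e6 : n+1+k = n+k+1 := by omega
  have e7 : n+1+(k+1)-1 = n+k+1 := by omega
  have e8 : n+1+(k+1) = n+k+2 := by omega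
  have e9 : 2*(k+1) = 2*k+1+1 := by omega
  rw [e1,e2,e3,e4,e5,e6,e7,e8,e9]
  have h1 : (n+k+1).choose (2*k+1+1) = (n+k).choose (2*k+1) + (n+k).choose (2*k+1+1) :=
    Nat.choose_succ_succ' (n+k) (2*k+1)
  have h1b : (n+k+1).choose (2*k+1) = (n+k).choose (2*k) + (n+k).choose (2*k+1) := by
    have := Nat.choose_succ_succ' (n+k) (2*k); omega
  have h2 : (n+k+2).choose (2*k+1+1) = (n+k+1).choose (2*k+1) + (n+k+1).choose (2*k+1+1) :=
    Nat.choose_succ_succ' (n+k+1) (2*k+1)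
  have h2b : (n+k+2).choose (2*k+1) = (n+k+1).choose (2*k) + (n+k+1).choose (2*k+1) := by
    have h := Nat.choose_succ_succ' (n+k+1) (2*k)
    rw [show n+k+1+1 = n+k+2 by omega] at h; omega
  have h3 : (n+k+3).choose (2*k+1+1) = (n+k+2).choose (2*k+1) + (n+k+2).choose (2*k+1+1) :=
    Nat.choose_succ_succ' (n+k+2) (2*k+1)
  omega

lemma dC_key {n : ℕ} (hn : 1 ≤ n) (k : ℕ) :
    (n+k) * dC n k = 2 * n * (n+k).choose (2*k) := by
  unfold dC
  obtain ⟨p, hp⟩ : ∃ p, n + k = p + 1 := ⟨n+k-1, by omega⟩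
  rw [hp]
  have h1 : (p+1) * p.choose (2*k) = (p+1).choose (2*k+1) * (2*k+1) := by
    have := Nat.add_one_mul_choose_eq p (2*k)
    simpa [Nat.succ_eq_add_one, mul_comm] using this
  have h2 : (p+1).choose (2*k+1) * (2*k+1) = (p+1).choose (2*k) * (p+1 - 2*k) :=
    Nat.choose_succ_right_eq (p+1) (2*k)
  rcases le_or_gt (2*k) (p+1) with h | h
  · have hs : p + 1 - 2*k = n - k := by omega
    rw [hs] at h2
    have e : p + 1 - 1 = p := by omega
    rw [e]
    have hthis : (p+1) * p.choose (2*k) = (p+1).choose (2*k) * (n-k) := by rw [h1, h2]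
    have hkn : k ≤ n := by
      by_contra hc
      push_neg at hc
      omega
    nlinarith [hthis, Nat.sub_add_cancel hkn]
  · rw [Nat.choose_eq_zero_of_lt h, Nat.choose_eq_zero_of_lt (by omega)]
    simp

lemma cQ_zero (n : ℕ) : cQ n 0 = (-1)^n := by
  simp [cQ, dC_zero]

lemma cQ_rec (n k : ℕ) :
    cQ (n+2) (k+1) = cQ (n+1) k - 2 * cQ (n+1) (k+1) - cQ n (k+1) := by
  have hq : (dC (n+2) (k+1) : ℚ) + dC n (k+1) = dC (n+1) k + 2 * dC (n+1) (k+1) := by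
    exact_mod_cast congrArg (Nat.cast : ℕ → ℚ) (dC_rec n k)
  unfold cQ
  linear_combination (-(-1:ℚ)^(n+k) / 2) * hq

lemma sum_rec (n : ℕ) (f : ℕ → ℚ) :
    ∑ k ∈ range (n+3), cQ (n+2) k * f k
    = ∑ k ∈ range (n+2), cQ (n+1) k * f (k+1)
      - 2 * ∑ k ∈ range (n+2), cQ (n+1) k * f k
      - ∑ k ∈ range (n+1), cQ n k * f k := by
  have h0 : ∑ k ∈ range (n+3), cQ (n+2) k * f k
      = ∑ k ∈ range (n+2), cQ (n+2) (k+1) * f (k+1) + cQ (n+2) 0 * f 0 :=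
    Finset.sum_range_succ' _ _
  have h1 : ∑ k ∈ range (n+2), cQ (n+2) (k+1) * f (k+1)
      = ∑ k ∈ range (n+2), (cQ (n+1) k * f (k+1) - 2 * (cQ (n+1) (k+1) * f (k+1))
          - cQ n (k+1) * f (k+1)) := by
    refine Finset.sum_congr rfl fun k _ => ?_
    rw [cQ_rec]; ring
  have h2 : ∑ k ∈ range (n+2), cQ (n+1) (k+1) * f (k+1)
      = ∑ k ∈ range (n+2), cQ (n+1) k * f k - cQ (n+1) 0 * f 0 := by
    have h := Finset.sum_range_succ' (fun k => cQ (n+1) k * f k) (n+2)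
    rw [Finset.sum_range_succ] at h
    rw [cQ_eq_zero (show n+1 < n+2 by omega)] at h
    simp only [zero_mul, add_zero] at h
    linarith [h]
  have h3 : ∑ k ∈ range (n+2), cQ n (k+1) * f (k+1)
      = ∑ k ∈ range (n+1), cQ n k * f k - cQ n 0 * f 0 := by
    have h := Finset.sum_range_succ' (fun k => cQ n k * f k) (n+2)
    rw [Finset.sum_range_succ, Finset.sum_range_succ] at h
    rw [cQ_eq_zero (show n < n+1 by omega), cQ_eq_zero (show n < n+2 by omega)] at h
    simp only [zero_mul, add_zero] at h
    linarith [h]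
  rw [h0, h1, Finset.sum_sub_distrib, Finset.sum_sub_distrib, ← Finset.mul_sum,
    h2, h3, cQ_zero, cQ_zero, cQ_zero]
  ring

noncomputable def AQ (n : ℕ) : ℚ := ∑ k ∈ range (n+1), cQ n k * (Nat.fib (3*k+1) : ℚ)
noncomputable def BQ (n : ℕ) : ℚ := ∑ k ∈ range (n+1), cQ n k * (Nat.fib (3*k) : ℚ)

lemma fib_shift1 (k : ℕ) : (Nat.fib (3*(k+1)+1) : ℚ)
    = 3 * Nat.fib (3*k+1) + 2 * Nat.fib (3*k) := by
  have h1 : Nat.fib (3*k+2) = Nat.fib (3*k) + Nat.fib (3*k+1) := Nat.fib_add_two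
  have h2 : Nat.fib (3*k+3) = Nat.fib (3*k+1) + Nat.fib (3*k+2) := Nat.fib_add_two
  have h3 : Nat.fib (3*k+4) = Nat.fib (3*k+2) + Nat.fib (3*k+3) := Nat.fib_add_two
  have e : 3*(k+1)+1 = 3*k+4 := by ring
  rw [e, h3, h2, h1]; push_cast; ring

lemma fib_shift0 (k : ℕ) : (Nat.fib (3*(k+1)) : ℚ)
    = 2 * Nat.fib (3*k+1) + Nat.fib (3*k) := by
  have h1 : Nat.fib (3*k+2) = Nat.fib (3*k) + Nat.fib (3*k+1) := Nat.fib_add_two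
  have h2 : Nat.fib (3*k+3) = Nat.fib (3*k+1) + Nat.fib (3*k+2) := Nat.fib_add_two
  have e : 3*(k+1) = 3*k+3 := by ring
  rw [e, h2, h1]; push_cast; ring

lemma AQ_rec (n : ℕ) : AQ (n+2) = AQ (n+1) + 2 * BQ (n+1) - AQ n := by
  have h := sum_rec n (fun k => (Nat.fib (3*k+1) : ℚ))
  have h1 : ∑ k ∈ range (n+2), cQ (n+1) k * (Nat.fib (3*(k+1)+1) : ℚ)
      = 3 * AQ (n+1) + 2 * BQ (n+1) := by
    unfold AQ BQ
    rw [Finset.mul_sum, Finset.mul_sum, ← Finset.sum_add_distrib]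
    refine Finset.sum_congr rfl fun k _ => ?_
    rw [fib_shift1]; ring
  unfold AQ BQ at *
  simp only [show n+2+1 = n+3 from rfl, show n+1+1 = n+2 from rfl] at *
  rw [h, h1]; ring

lemma BQ_rec (n : ℕ) : BQ (n+2) = 2 * AQ (n+1) - BQ (n+1) - BQ n := by
  have h := sum_rec n (fun k => (Nat.fib (3*k) : ℚ))
  have h1 : ∑ k ∈ range (n+2), cQ (n+1) k * (Nat.fib (3*(k+1)) : ℚ)
      = 2 * AQ (n+1) + BQ (n+1) := by
    unfold AQ BQ
    rw [Finset.mul_sum, ← Finset.sum_add_distrib]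
    refine Finset.sum_congr rfl fun k _ => ?_
    rw [fib_shift0]; ring
  unfold AQ BQ at *
  simp only [show n+2+1 = n+3 from rfl, show n+1+1 = n+2 from rfl] at *
  rw [h, h1]; ring

lemma AB_val (n : ℕ) :
    (AQ n = (if Even n then 2*(Nat.fib (n+1):ℚ) - Nat.fib n else (Nat.fib n : ℚ)) / 2)
    ∧ (BQ n = if Even n then 0 else (Nat.fib n : ℚ)) := by
  induction n using Nat.twoStepInduction with
  | zero =>
    constructor <;> norm_num [AQ, BQ, cQ, dC, Finset.sum_range_succ]
  | one =>
    constructor <;>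
      norm_num [AQ, BQ, cQ, dC, Finset.sum_range_succ, Nat.fib, Nat.choose]
  | more n ih1 ih2 =>
    have c2 : (Nat.fib (n+2) : ℚ) = Nat.fib n + Nat.fib (n+1) := by
      rw [Nat.fib_add_two]; push_cast; ring
    have c3 : (Nat.fib (n+3) : ℚ) = Nat.fib (n+1) + Nat.fib (n+2) := by
      rw [show n+3 = (n+1)+2 from rfl, Nat.fib_add_two]; push_cast; ring
    rw [AQ_rec, BQ_rec]
    simp only [show n+1+1 = n+2 from rfl, show n+2+1 = n+3 from rfl] at *
    rcases Nat.even_or_odd n with he | ho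
    · have h1 : ¬ Even (n+1) := by simp [Nat.even_add_one, he]
      have h2 : Even (n+2) := by simp [Nat.even_add_one, h1]
      simp only [he, h1, h2, if_true, if_false] at *
      obtain ⟨ha1, hb1⟩ := ih1
      obtain ⟨ha2, hb2⟩ := ih2
      constructor
      · rw [ha1, ha2, hb2, c3, c2]; ring
      · rw [ha2, hb1, hb2]; ring
    · have he' : ¬ Even n := Nat.not_even_iff_odd.mpr ho
      have h1 : Even (n+1) := by simp [Nat.even_add_one, he']
      have h2 : ¬ Even (n+2) := by simp [Nat.even_add_one, h1]
      simp only [he', h1, h2, if_true, if_false] at *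
      obtain ⟨ha1, hb1⟩ := ih1
      obtain ⟨ha2, hb2⟩ := ih2
      constructor
      · linarith [c2]
      · linarith [c2]

theorem stmt_13 (n : ℕ) (hn : 0 < n) (t : ℤ) :
    (Odd n →
      ∑ k ∈ range (n + 1), (-1 : ℚ) ^ (n - k) * ((n : ℚ) / (n + k)) *
        (Nat.choose (n + k) (n - k)) * (fibZ (3 * k + t) : ℚ) =
      1 / 2 * (lucasZ t : ℚ) * (fibZ n : ℚ)) ∧
    (Even n →
      ∑ k ∈ range (n + 1), (-1 : ℚ) ^ (n - k) * ((n : ℚ) / (n + k)) *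
        (Nat.choose (n + k) (n - k)) * (fibZ (3 * k + t) : ℚ) =
      1 / 2 * (fibZ t : ℚ) * (lucasZ n : ℚ)) := by
  have key : ∑ k ∈ range (n + 1), (-1 : ℚ) ^ (n - k) * ((n : ℚ) / (n + k)) *
        (Nat.choose (n + k) (n - k)) * (fibZ (3 * k + t) : ℚ)
      = (fibZ t : ℚ) * AQ n + (fibZ (t-1) : ℚ) * BQ n := by
    unfold AQ BQ
    rw [Finset.mul_sum, Finset.mul_sum, ← Finset.sum_add_distrib]
    refine Finset.sum_congr rfl fun k hk => ?_
    rw [Finset.mem_range] at hk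
    have hkn : k ≤ n := by omega
    have hcs : (n+k).choose (n-k) = (n+k).choose (2*k) := by
      rw [show n-k = (n+k) - 2*k by omega, Nat.choose_symm (by omega)]
    have hd := dC_key (show 1 ≤ n by omega) k
    have hdq : ((n:ℚ)+k) * dC n k = 2*n*((n+k).choose (2*k):ℚ) := by exact_mod_cast hd
    have hsign : (-1:ℚ)^(n-k) = (-1:ℚ)^(n+k) := by
      rw [show n+k = (n-k) + 2*k by omega, pow_add, pow_mul]; norm_num
    have hnk : ((n:ℚ)+k) ≠ 0 := by
      have : (0:ℕ) < n + k := by omega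
      exact_mod_cast Nat.cast_pos.mpr this |>.ne'
    have hmain : (n:ℚ)/((n:ℚ)+k) * ((n+k).choose (2*k):ℚ) = (dC n k : ℚ)/2 := by
      field_simp
      linarith [hdq]
    have hco : (-1:ℚ)^(n-k) * ((n:ℚ)/((n:ℚ)+k)) * ((n+k).choose (n-k) : ℚ) = cQ n k := by
      rw [hcs, hsign, cQ, mul_assoc, hmain]; ring
    have hfib : (fibZ (3 * (k:ℤ) + t) : ℚ)
        = (Nat.fib (3*k+1) : ℚ) * (fibZ t : ℚ) + (Nat.fib (3*k):ℚ) * (fibZ (t-1):ℚ) := by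
      have h := fibZ_nat_add (3*k) t
      rw [show ((3*k:ℕ):ℤ) = 3*(k:ℤ) by push_cast; ring] at h
      push_cast [h]
      ring
    rw [hco, hfib]
    ring
  obtain ⟨hA, hB⟩ := AB_val n
  constructor
  · intro hodd
    have hne : ¬ Even n := Nat.not_even_iff_odd.mpr hodd
    rw [key, hA, hB]
    simp only [hne, if_false]
    have hL : (lucasZ t : ℚ) = (fibZ t : ℚ) + 2 * (fibZ (t-1) : ℚ) := by
      have h := fibZ_add_two (t-1)
      rw [show t-1+2 = t+1 by ring, show t-1+1 = t by ring] at h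
      rw [lucasZ, h]; push_cast; ring
    rw [hL, show (fibZ (n:ℤ) : ℚ) = (Nat.fib n : ℚ) by rw [fibZ_natCast]; push_cast; ring]
    ring
  · intro heven
    rw [key, hA, hB]
    simp only [heven, if_true]
    obtain ⟨m, rfl⟩ : ∃ m, n = m + 1 := ⟨n-1, by omega⟩
    have hLn : (lucasZ ((m+1:ℕ):ℤ) : ℚ) = 2*(Nat.fib (m+1+1):ℚ) - Nat.fib (m+1) := by
      rw [lucasZ, show ((m+1:ℕ):ℤ) - 1 = ((m:ℕ):ℤ) by push_cast; ring,
        show ((m+1:ℕ):ℤ) + 1 = ((m+2:ℕ):ℤ) by push_cast; ring, fibZ_natCast, fibZ_natCast]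
      have hf : Nat.fib (m+2) = Nat.fib m + Nat.fib (m+1) := Nat.fib_add_two
      push_cast [hf]; ring
    rw [hLn]
    ring
end

section
/- For every real number x and every nonnegative integer n, the sum over k from 0 to n of (-4)^k * C(n+k, n-k) * x^{2k} equals (-1)^n · U_{2n}(x), where U_m denotes the Chebyshev polynomial of the second kind. -/
open Finset

private lemma choose_key (a m : ℕ) :
    (a+2).choose (m+2) + a.choose (m+2) = 2 * ((a+1).choose (m+2)) + a.choose m := by
  rw [Nat.choose_succ_succ (a+1) (m+1), Nat.choose_succ_succ a m,
    Nat.choose_succ_succ a (m+1)]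
  ring

private noncomputable def S (x : ℝ) (n : ℕ) : ℝ :=
  ∑ k ∈ range (n+1), (-4 : ℝ) ^ k * ((n+k).choose (2*k) : ℝ) * x ^ (2*k)

private lemma S_eq (x : ℝ) (n : ℕ) :
    (∑ k ∈ range (n + 1), (-4 : ℝ) ^ k * (Nat.choose (n + k) (n - k)) * x ^ (2 * k))
      = S x n := by
  refine Finset.sum_congr rfl fun k hk => ?_
  simp only [Finset.mem_range] at hk
  have hk' : k ≤ n := by omega
  have h1 : (n+k).choose (n-k) = (n+k).choose (2*k) := by
    have h2 : (n+k) - (n-k) = 2*k := by omega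
    rw [← h2, Nat.choose_symm (by omega)]
  rw [h1]

private lemma S_extend (x : ℝ) (n N : ℕ) (h : n + 1 ≤ N) :
    S x n = ∑ k ∈ range N, (-4 : ℝ) ^ k * ((n+k).choose (2*k) : ℝ) * x ^ (2*k) := by
  unfold S
  refine Finset.sum_subset (Finset.range_subset_range.2 h) fun k _ hk => ?_
  simp only [Finset.mem_range, not_lt] at hk
  have : (n+k).choose (2*k) = 0 := Nat.choose_eq_zero_of_lt (by omega)
  simp [this]

private lemma S_rec (x : ℝ) (n : ℕ) :
    S x (n+2) = (2 - 4*x^2) * S x (n+1) - S x n := by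
  have hA := S_extend x (n+2) (n+3) (by omega)
  have hB := S_extend x (n+1) (n+3) (by omega)
  have hB2 := S_extend x (n+1) (n+2) (by omega)
  have hC := S_extend x n (n+3) (by omega)
  have key : S x (n+2) + S x n - 2 * S x (n+1) = (-4*x^2) * S x (n+1) := by
    rw [hA, hC]
    nth_rewrite 1 [hB]
    nth_rewrite 1 [hB2]
    rw [Finset.mul_sum, ← Finset.sum_add_distrib, ← Finset.sum_sub_distrib]
    rw [Finset.sum_range_succ' (fun k => (-4 : ℝ) ^ k * ((n+2+k).choose (2*k) : ℝ) * x ^ (2*k)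
        + (-4 : ℝ) ^ k * ((n+k).choose (2*k) : ℝ) * x ^ (2*k)
        - 2 * ((-4 : ℝ) ^ k * ((n+1+k).choose (2*k) : ℝ) * x ^ (2*k))) (n+2)]
    have h0 : ((-4 : ℝ) ^ 0 * ((n+2+0).choose (2*0) : ℝ) * x ^ (2*0)
        + (-4 : ℝ) ^ 0 * ((n+0).choose (2*0) : ℝ) * x ^ (2*0)
        - 2 * ((-4 : ℝ) ^ 0 * ((n+1+0).choose (2*0) : ℝ) * x ^ (2*0))) = 0 := by
      norm_num
    rw [h0, add_zero, Finset.mul_sum]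
    refine Finset.sum_congr rfl fun k _ => ?_
    have key2 := choose_key (n+k+1) (2*k)
    have keyR : ((n+k+1+2).choose (2*k+2) : ℝ) + ((n+k+1).choose (2*k+2) : ℝ)
        = 2 * ((n+k+1+1).choose (2*k+2) : ℝ) + ((n+k+1).choose (2*k) : ℝ) := by
      exact_mod_cast key2
    have e1 : n+2+(k+1) = n+k+1+2 := by omega
    have e2 : n+(k+1) = n+k+1 := by omega
    have e3 : n+1+(k+1) = n+k+1+1 := by omega
    have e4 : n+1+k = n+k+1 := by omega
    have e5 : 2*(k+1) = 2*k+2 := by omega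
    rw [e1, e2, e3, e4, e5, pow_succ (-4 : ℝ) k, pow_add x (2*k) 2]
    linear_combination ((-4 : ℝ)^k * (-4) * (x^(2*k) * x^2)) * keyR
  linarith [key]

private lemma U_rec (x : ℝ) (m : ℤ) :
    (Polynomial.Chebyshev.U ℝ (m+4)).eval x
      = (4*x^2 - 2) * (Polynomial.Chebyshev.U ℝ (m+2)).eval x
        - (Polynomial.Chebyshev.U ℝ m).eval x := by
  have h4 : (Polynomial.Chebyshev.U ℝ (m+4)) = 2 * Polynomial.X * Polynomial.Chebyshev.U ℝ (m+3)
      - Polynomial.Chebyshev.U ℝ (m+2) := by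
    have := Polynomial.Chebyshev.U_add_two ℝ (m+2)
    convert this using 2 <;> ring_nf
  have h3 : (Polynomial.Chebyshev.U ℝ (m+3)) = 2 * Polynomial.X * Polynomial.Chebyshev.U ℝ (m+2)
      - Polynomial.Chebyshev.U ℝ (m+1) := by
    have := Polynomial.Chebyshev.U_add_two ℝ (m+1)
    convert this using 2 <;> ring_nf
  have h2 : (Polynomial.Chebyshev.U ℝ (m+2)) = 2 * Polynomial.X * Polynomial.Chebyshev.U ℝ (m+1)
      - Polynomial.Chebyshev.U ℝ m := Polynomial.Chebyshev.U_add_two ℝ m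
  have e2 := congrArg (Polynomial.eval x) h2
  have e3 := congrArg (Polynomial.eval x) h3
  have e4 := congrArg (Polynomial.eval x) h4
  simp only [Polynomial.eval_sub, Polynomial.eval_mul, Polynomial.eval_ofNat,
    Polynomial.eval_X, Polynomial.eval_mul] at e2 e3 e4
  linear_combination e4 + 2*x*e3 + e2

theorem stmt_18 (x : ℝ) (n : ℕ) :
    ∑ k ∈ range (n + 1), (-4 : ℝ) ^ k * (Nat.choose (n + k) (n - k)) * x ^ (2 * k) =
    (-1 : ℝ) ^ n * (Polynomial.Chebyshev.U ℝ (2 * n)).eval x := by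
  rw [S_eq]
  induction n using Nat.twoStepInduction with
  | zero =>
      simp [S, Polynomial.Chebyshev.U_zero]
  | one =>
      have hU : Polynomial.Chebyshev.U ℝ (2*(1:ℕ)) = Polynomial.Chebyshev.U ℝ 2 := by norm_num
      rw [hU, Polynomial.Chebyshev.U_two]
      simp [S, Finset.sum_range_succ]
      ring
  | more m ih1 ih2 =>
      rw [S_rec]
      rw [ih1, ih2]
      have h := U_rec x (2*(m:ℤ))
      have c1 : (2 * ((m+1 : ℕ) : ℤ)) = 2*(m:ℤ)+2 := by push_cast; ring
      have c2 : (2 * ((m+2 : ℕ) : ℤ)) = 2*(m:ℤ)+4 := by push_cast; ring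
      rw [c1, c2, h]
      ring
end
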